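/- Let p ∈ (1,2) and κ, K, C₀ > 0. Then there exists a constant C = C(p, κ, K, C₀) > 0 with the following property. Let Φ : ℝ → ℝ be twice differentiable with Φ ≥ 0, Φ'' ≥ 0, |Φ'(v)|² ≤ C₀ Φ''(v) Φ(v), |Φ'(v)| ≤ C₀ (Φ(v))^{(p−1)/p}, and |Φ'(v)·v| ≤ C₀ Φ(v) for all v ∈ ℝ. Let a be a real symmetric d×d matrix and σ a real d×k matrix with κ‖ξ‖² + ‖σᵀξ‖² ≤ 2⟨aξ, ξ⟩ ≤ K‖ξ‖² for all ξ ∈ ℝ^d, and let b ∈ ℝ^d, μ ∈ ℝ^k, c ∈ ℝ satisfy ‖b‖ ≤ K, ‖μ‖ ≤ K, |c| ≤ K. Then for all v, F ∈ ℝ, ξ ∈ ℝ^d and z ∈ ℝ^k: Φ''(v)·(⟨aξ, ξ⟩ + ⟨σᵀξ, z⟩ + ‖z‖²/2) − Φ'(v)·(⟨b, ξ⟩ + c·v + ⟨μ, z⟩ + F) ≥ −C·(Φ(v) + |F|^p). -/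

import Mathlib

/-!
Split the first-order term into its four pieces. The `F`-term is handled by Young's inequality
`Φ^((p-1)/p) |F| ≤ Φ + |F|^p`, the `c v`-term directly by `|Φ'(v) v| ≤ C₀ Φ(v)`. Ellipticity
makes the second-order form coercive, `⟨aξ, ξ⟩ + ⟨σᵀξ, z⟩ + ‖z‖²/2 ≥ λ₁ ‖ξ‖² + λ₂ ‖z‖²`, and
since `|Φ'|² ≤ C₀ Φ'' Φ`, completing the square absorbs the drift terms `K |Φ'| ‖ξ‖` and
`K |Φ'| ‖z‖` into `Φ''` times this form, at the cost of a multiple of `Φ`.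
-/

open scoped RealInnerProductSpace

theorem rpow_div_mul_le_add_rpow {p P G : ℝ} (hp : 1 < p) (hP : 0 ≤ P) (hG : 0 ≤ G) :
    P ^ ((p - 1) / p) * G ≤ P + G ^ p := by
  have hp₀ : 0 < p := by linarith
  have hweights : (p - 1) / p + 1 / p = 1 := by field_simp; ring
  have hGp : (G ^ p) ^ (1 / p) = G := by
    rw [← Real.rpow_mul hG, mul_one_div_cancel hp₀.ne', Real.rpow_one]
  calc P ^ ((p - 1) / p) * G = P ^ ((p - 1) / p) * (G ^ p) ^ (1 / p) := by rw [hGp]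
    _ ≤ (p - 1) / p * P + 1 / p * G ^ p :=
      Real.geom_mean_le_arith_mean2_weighted (by positivity) (by positivity) hP
        (by positivity) hweights
    _ ≤ P + G ^ p := by
      gcongr
      · exact mul_le_of_le_one_left hP (by rw [div_le_one hp₀]; linarith)
      · exact mul_le_of_le_one_left (by positivity) (by rw [div_le_one hp₀]; linarith)

theorem mul_mul_le_mul_sq_add_of_sq_le {c e g P β l t : ℝ} (hl : 0 < l) (he : 0 ≤ e)
    (hcP : 0 ≤ c * P) (hg : g ^ 2 ≤ c * e * P) :
    β * g * t ≤ l * e * t ^ 2 + β ^ 2 * c * P / (4 * l) := by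
  have hβcP : 0 ≤ β ^ 2 * c * P := by rw [mul_assoc]; positivity
  rw [← sub_nonneg, show l * e * t ^ 2 + β ^ 2 * c * P / (4 * l) - β * g * t
      = (4 * l ^ 2 * e * t ^ 2 + β ^ 2 * c * P - 4 * l * β * g * t) / (4 * l) by
    field_simp]
  apply div_nonneg _ (by positivity)
  rcases he.eq_or_lt with rfl | he
  · have : g = 0 := by nlinarith
    simp [this, hβcP]
  · -- `e * numerator = (2 l e t - β g)² + β² (c e P - g²)`
    refine nonneg_of_mul_nonneg_right ?_ he
    nlinarith [sq_nonneg (2 * l * e * t - β * g), mul_le_mul_of_nonneg_left hg (sq_nonneg β)]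

section InnerProductSpace

variable {E : Type*} [NormedAddCommGroup E] [InnerProductSpace ℝ E]

theorem le_add_inner_add_half_norm_sq {κ K A x : ℝ} (S z : E) (hκ : 0 < κ) (hK : 0 < K)
    (hlo : κ * x ^ 2 + ‖S‖ ^ 2 ≤ 2 * A) (hhi : 2 * A ≤ K * x ^ 2) :
    κ / 4 * x ^ 2 + κ / (4 * (κ + 2 * K)) * ‖z‖ ^ 2 ≤ A + ⟪S, z⟫ + ‖z‖ ^ 2 / 2 := by
  set s := ‖S‖
  set w := ‖z‖
  set t := κ / (κ + 2 * K) with ht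
  have ht₀ : 0 ≤ t := by positivity
  have ht₁ : t ≤ 1 := by rw [div_le_one (by positivity)]; linarith
  have htK : t * K ≤ κ / 2 := by
    rw [ht, div_mul_eq_mul_div, div_le_iff₀ (by positivity)]; nlinarith
  have hs : s ^ 2 ≤ K * x ^ 2 := by nlinarith [sq_nonneg x]
  have hinner : -(s * w) ≤ ⟪S, z⟫ := neg_le_of_abs_le (abs_real_inner_le_norm S z)
  -- the weight `t ≤ 1` is chosen so that `t s² ≤ t K x²` is absorbed by `κ x² / 2`
  have hsq : t * (w ^ 2 / 2 - s ^ 2) ≤ (s - w) ^ 2 := by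
    have h : w ^ 2 / 2 - s ^ 2 ≤ (s - w) ^ 2 := by nlinarith [sq_nonneg (w - 2 * s)]
    rcases le_total 0 (w ^ 2 / 2 - s ^ 2) with hX | hX
    · nlinarith [mul_le_of_le_one_left hX ht₁]
    · nlinarith [mul_nonpos_of_nonneg_of_nonpos ht₀ hX, sq_nonneg (s - w)]
  have hts : t * s ^ 2 ≤ κ / 2 * x ^ 2 := by nlinarith [mul_le_mul_of_nonneg_left hs ht₀]
  rw [show κ / (4 * (κ + 2 * K)) = t / 4 by rw [ht]; field_simp]
  nlinarith

theorem mul_inner_le_of_norm_le {K r : ℝ} {u : E} (y : E) (hu : ‖u‖ ≤ K) :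
    r * ⟪u, y⟫ ≤ K * |r| * ‖y‖ :=
  calc r * ⟪u, y⟫ ≤ |r| * |⟪u, y⟫| := by rw [← abs_mul]; exact le_abs_self _
    _ ≤ |r| * (K * ‖y‖) := by
      gcongr
      exact (abs_real_inner_le_norm u y).trans (by gcongr)
    _ = K * |r| * ‖y‖ := by ring

end InnerProductSpace

theorem stmt_19 (p κ K C₀ : ℝ) (hp1 : 1 < p)
    (hκ : 0 < κ) (hK : 0 < K) (hC₀ : 0 < C₀) (d k : ℕ) :
    ∃ C > (0 : ℝ),
      ∀ (Φ Φ' Φ'' : ℝ → ℝ),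
        (∀ v : ℝ, HasDerivAt Φ (Φ' v) v) →
        (∀ v : ℝ, HasDerivAt Φ' (Φ'' v) v) →
        (∀ v : ℝ, 0 ≤ Φ v) →
        (∀ v : ℝ, 0 ≤ Φ'' v) →
        (∀ v : ℝ, |Φ' v| ^ 2 ≤ C₀ * Φ'' v * Φ v) →
        (∀ v : ℝ, |Φ' v| ≤ C₀ * Φ v ^ ((p - 1) / p)) →
        (∀ v : ℝ, |Φ' v * v| ≤ C₀ * Φ v) →
      ∀ (a : Matrix (Fin d) (Fin d) ℝ), a.IsSymm →
      ∀ (σ : Matrix (Fin d) (Fin k) ℝ),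
        (∀ ξ : EuclideanSpace ℝ (Fin d),
          κ * ‖ξ‖ ^ 2 + ‖Matrix.toEuclideanLin σ.transpose ξ‖ ^ 2
            ≤ 2 * ⟪Matrix.toEuclideanLin a ξ, ξ⟫ ∧
          2 * ⟪Matrix.toEuclideanLin a ξ, ξ⟫ ≤ K * ‖ξ‖ ^ 2) →
      ∀ (b : EuclideanSpace ℝ (Fin d)) (μ : EuclideanSpace ℝ (Fin k)) (c : ℝ),
        ‖b‖ ≤ K → ‖μ‖ ≤ K → |c| ≤ K →
      ∀ (v F : ℝ) (ξ : EuclideanSpace ℝ (Fin d)) (z : EuclideanSpace ℝ (Fin k)),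
        Φ'' v * (⟪Matrix.toEuclideanLin a ξ, ξ⟫
              + ⟪Matrix.toEuclideanLin σ.transpose ξ, z⟫ + ‖z‖ ^ 2 / 2)
            - Φ' v * (⟪b, ξ⟫ + c * v + ⟪μ, z⟫ + F)
          ≥ -C * (Φ v + |F| ^ p) := by
  set l := κ / (4 * (κ + 2 * K)) with hl
  set M := K ^ 2 / (4 * (κ / 4)) + K ^ 2 / (4 * l) + K
  refine ⟨C₀ * (M + 1), by positivity, ?_⟩
  intro Φ Φ' Φ'' _ _ hΦ hΦ'' hsq hpow hlin a _ σ hσ b μ c hb hμ hc v F ξ z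
  obtain ⟨hlo, hhi⟩ := hσ ξ
  have hcoercive := mul_le_mul_of_nonneg_left
    (le_add_inner_add_half_norm_sq (Matrix.toEuclideanLin σ.transpose ξ) z hκ hK hlo hhi) (hΦ'' v)
  rw [← hl] at hcoercive
  have hCΦ : 0 ≤ C₀ * Φ v := mul_nonneg hC₀.le (hΦ v)
  have hdriftξ := mul_mul_le_mul_sq_add_of_sq_le (β := K) (t := ‖ξ‖) (by positivity : 0 < κ / 4)
    (hΦ'' v) hCΦ (hsq v)
  have hdriftz := mul_mul_le_mul_sq_add_of_sq_le (β := K) (t := ‖z‖) (by positivity : 0 < l)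
    (hΦ'' v) hCΦ (hsq v)
  have hb' := mul_inner_le_of_norm_le (r := Φ' v) ξ hb
  have hμ' := mul_inner_le_of_norm_le (r := Φ' v) z hμ
  have hc' : Φ' v * (c * v) ≤ K * (C₀ * Φ v) :=
    calc Φ' v * (c * v) ≤ |c| * |Φ' v * v| := by
          rw [← abs_mul, mul_left_comm]; exact le_abs_self _
      _ ≤ K * (C₀ * Φ v) := mul_le_mul hc (hlin v) (abs_nonneg _) hK.le
  have hF : Φ' v * F ≤ C₀ * (Φ v + |F| ^ p) :=
    calc Φ' v * F ≤ |Φ' v| * |F| := by rw [← abs_mul]; exact le_abs_self _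
      _ ≤ C₀ * Φ v ^ ((p - 1) / p) * |F| := by gcongr; exact hpow v
      _ ≤ C₀ * (Φ v + |F| ^ p) := by
        rw [mul_assoc]; gcongr; exact rpow_div_mul_le_add_rpow hp1 (hΦ v) (abs_nonneg F)
  have hMF : 0 ≤ M * (C₀ * |F| ^ p) := by positivity
  have hMΦ : M * (C₀ * Φ v) = K ^ 2 * C₀ * Φ v / (4 * (κ / 4)) + K ^ 2 * C₀ * Φ v / (4 * l)
      + K * (C₀ * Φ v) := by ring
  linarith
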